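/- Let μ = (a+1, b-1) with a+1 > b-1 and b ≥ 3, and for 2 ≤ i ≤ b-1 let w_i = (a, 1^{i-2}, 3, 1^{b-1-i}) (content: a copies of 1, three copies of i, and one copy of every other entry in {2,…,b-1}). Then the number of standard tableaux of shape μ and content w_i equals b-2. -/

import Mathlib

/-- A standard tableau of two-row shape `(μ₁, μ₂)` with entries in `{1, …, n}`:
rows weakly increase left to right, columns strictly increase top to bottom. -/
structure TwoRowStandardTableau (μ1 μ2 n : ℕ) where
  row1 : Fin μ1 → ℕ
  row2 : Fin μ2 → ℕ
  row1_mem : ∀ p, 1 ≤ row1 p ∧ row1 p ≤ n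
  row2_mem : ∀ p, 1 ≤ row2 p ∧ row2 p ≤ n
  row1_mono : Monotone row1
  row2_mono : Monotone row2
  col_strict : ∀ (p : Fin μ2) (h : (p : ℕ) < μ1), row1 ⟨(p : ℕ), h⟩ < row2 p

/-- The content of a tableau: the number of occurrences of the entry `k`. -/
def TwoRowStandardTableau.content {μ1 μ2 n : ℕ} (T : TwoRowStandardTableau μ1 μ2 n)
    (k : ℕ) : ℕ :=
  (Finset.univ.filter fun p => T.row1 p = k).card +
    (Finset.univ.filter fun p => T.row2 p = k).card

/-!
All `a` ones lie in the first row: the second row is no longer than the first, and each of its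
entries exceeds the one above it. So the first row is `a` ones followed by a single entry `x ≠ 1`,
and the second row, being sorted, is determined by the multiset of the remaining entries. Conversely
every entry `x ≠ 1` of the content arises: the second row lies under ones only, so placing the
remaining entries there in increasing order gives a tableau. Hence the tableaux correspond to the
distinct entries `2, …, b - 1`.
-/

open Finset

section FinFunctions
variable {α : Type*} {m : ℕ}

theorem card_filter_eq_count_ofFn [DecidableEq α] (f : Fin m → α) (k : α) :
    #{p | f p = k} = (List.ofFn f).count k := by
  rw [← Multiset.coe_count, ← Fin.univ_val_map, Multiset.count_map, Finset.card,
    Finset.filter_val]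
  simp only [eq_comm]

theorem Multiset.mem_of_card_filter_eq_count [DecidableEq α] {f : Fin m → α} {t : Multiset α}
    (h : ∀ k, #{p | f p = k} = t.count k) (p : Fin m) : f p ∈ t :=
  Multiset.count_pos.1 <| by rw [← h]; exact Finset.card_pos.2 ⟨p, by simp⟩

variable [LinearOrder α]

theorem Monotone.eq_of_card_filter_eq {f g : Fin m → α} (hf : Monotone f) (hg : Monotone g)
    (h : ∀ k, #{p | f p = k} = #{p | g p = k}) : f = g :=
  List.ofFn_injective <| (List.perm_iff_count.2 fun k => by
    simpa only [card_filter_eq_count_ofFn] using h k).eq_of_sortedLE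
      hf.sortedLE_ofFn hg.sortedLE_ofFn

theorem Multiset.exists_monotone_card_filter_eq_count (s : Multiset α)
    (hs : Multiset.card s = m) :
    ∃ f : Fin m → α, Monotone f ∧ ∀ k, #{p | f p = k} = s.count k := by
  subst hs
  have hlen := s.length_sort (· ≤ ·)
  refine ⟨fun p => (s.sort (· ≤ ·)).get (p.cast hlen.symm), ?_, fun k => ?_⟩
  · exact fun p q hpq => (s.pairwise_sort _).sortedLE.monotone_get ((Fin.cast_le_cast _).2 hpq)
  · rw [card_filter_eq_count_ofFn, ← List.ofFn_congr hlen, List.ofFn_get, ← Multiset.coe_count,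
      Multiset.sort_eq]

theorem Monotone.ne_last_and_eq_of_card_filter_eq {a : ℕ} {f : Fin (a + 1) → α} {c : α}
    (hf : Monotone f) (hc : ∀ p, c ≤ f p) (hcard : #{p | f p = c} = a) :
    f (Fin.last a) ≠ c ∧ ∀ p ≠ Fin.last a, f p = c := by
  have hlast : f (Fin.last a) ≠ c := by
    intro h
    have hall : #{p | f p = c} = a + 1 := by
      rw [filter_true_of_mem fun p _ => le_antisymm (h ▸ hf (Fin.le_last p)) (hc p), card_univ,
        Fintype.card_fin]
    omega
  have hfiber : ({p | f p = c} : Finset _) = univ.erase (Fin.last a) :=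
    eq_of_subset_of_card_le
      (fun q hq => mem_erase.2 ⟨fun h => hlast (h ▸ (mem_filter.1 hq).2), mem_univ q⟩)
      (by simp [hcard])
  refine ⟨hlast, fun p hp => ?_⟩
  have hp' : p ∈ ({p | f p = c} : Finset _) := hfiber ▸ mem_erase.2 ⟨hp, mem_univ p⟩
  exact (mem_filter.1 hp').2

end FinFunctions

namespace TwoRowStandardTableau

theorem ext {μ1 μ2 n : ℕ} {T T' : TwoRowStandardTableau μ1 μ2 n} (h1 : T.row1 = T'.row1)
    (h2 : T.row2 = T'.row2) : T = T' := by
  cases T; cases T'; cases h1; cases h2; rfl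

theorem one_lt_row2 {μ1 μ2 n : ℕ} (T : TwoRowStandardTableau μ1 μ2 n) (h : μ2 ≤ μ1)
    (p : Fin μ2) : 1 < T.row2 p :=
  lt_of_le_of_lt (T.row1_mem _).1 (T.col_strict p (by omega))

theorem row1_mem_of_content_eq {μ1 μ2 n : ℕ} {s : Multiset ℕ} {T : TwoRowStandardTableau μ1 μ2 n}
    (hT : ∀ k, T.content k = s.count k) (p : Fin μ1) : T.row1 p ∈ s := by
  have hp : 0 < #{q | T.row1 q = T.row1 p} := Finset.card_pos.2 ⟨p, by simp⟩
  have hcount := hT (T.row1 p)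
  rw [content] at hcount
  exact Multiset.count_pos.1 (by omega)

section OnesInFirstRow

variable {a μ2 n : ℕ} {s : Multiset ℕ}

theorem card_filter_row1_eq_one (hμ : μ2 ≤ a + 1) {T : TwoRowStandardTableau (a + 1) μ2 n}
    (hT : ∀ k, T.content k = s.count k) : #{p | T.row1 p = 1} = s.count 1 := by
  have hrow2 : #{p | T.row2 p = 1} = 0 :=
    card_eq_zero.2 (filter_eq_empty_iff.2 fun p _ => (T.one_lt_row2 hμ p).ne')
  have hcount := hT 1
  rw [content, hrow2] at hcount
  exact hcount

theorem row1_last_ne_one_and_eq_one (hμ : μ2 ≤ a + 1) (hs1 : s.count 1 = a)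
    {T : TwoRowStandardTableau (a + 1) μ2 n} (hT : ∀ k, T.content k = s.count k) :
    T.row1 (Fin.last a) ≠ 1 ∧ ∀ p ≠ Fin.last a, T.row1 p = 1 :=
  T.row1_mono.ne_last_and_eq_of_card_filter_eq (fun p => (T.row1_mem p).1)
    ((card_filter_row1_eq_one hμ hT).trans hs1)

theorem eq_of_row1_last_eq (hμ : μ2 ≤ a + 1) (hs1 : s.count 1 = a)
    {T T' : TwoRowStandardTableau (a + 1) μ2 n} (hT : ∀ k, T.content k = s.count k)
    (hT' : ∀ k, T'.content k = s.count k) (h : T.row1 (Fin.last a) = T'.row1 (Fin.last a)) :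
    T = T' := by
  obtain ⟨-, hone⟩ := row1_last_ne_one_and_eq_one hμ hs1 hT
  obtain ⟨-, hone'⟩ := row1_last_ne_one_and_eq_one hμ hs1 hT'
  have hrow1 : T.row1 = T'.row1 := funext fun p => by
    by_cases hp : p = Fin.last a
    · rw [hp, h]
    · rw [hone p hp, hone' p hp]
  refine ext hrow1 (T.row2_mono.eq_of_card_filter_eq T'.row2_mono fun k => ?_)
  have hcount := hT k
  have hcount' := hT' k
  rw [content, hrow1] at hcount
  rw [content] at hcount'
  omega

theorem exists_row1_last_eq (hμ : μ2 ≤ a) (hs1 : s.count 1 = a)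
    (hcard : Multiset.card s = a + 1 + μ2) (hs : ∀ k ∈ s, 1 ≤ k ∧ k ≤ n) {x : ℕ} (hx : x ∈ s)
    (hx1 : x ≠ 1) :
    ∃ T : TwoRowStandardTableau (a + 1) μ2 n,
      (∀ k, T.content k = s.count k) ∧ T.row1 (Fin.last a) = x := by
  set r : Multiset ℕ := x ::ₘ Multiset.replicate a 1 with hr_def
  have hr1 : r.count 1 = a := by simp [r, hx1.symm]
  have hr_card : Multiset.card r = a + 1 := by simp [r]
  have hrs : r ≤ s := Multiset.le_iff_count.2 fun k => by
    have hxs := Multiset.count_pos.2 hx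
    rw [hr_def, Multiset.count_cons, Multiset.count_replicate]
    split_ifs <;> subst_vars <;> omega
  obtain ⟨f, hf, hfr⟩ := r.exists_monotone_card_filter_eq_count hr_card
  obtain ⟨g, hg, hgr⟩ := (s - r).exists_monotone_card_filter_eq_count (m := μ2)
    (by rw [Multiset.card_sub hrs, hcard, hr_card]; omega)
  have hf_mem (p) : f p ∈ s := Multiset.mem_of_le hrs (Multiset.mem_of_card_filter_eq_count hfr p)
  have hg_mem (p) : g p ∈ s :=
    Multiset.mem_of_le (Multiset.sub_le_self _ _) (Multiset.mem_of_card_filter_eq_count hgr p)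
  have hg_ne (p) : g p ≠ 1 := fun h => by
    have hp := Multiset.count_pos.2 (Multiset.mem_of_card_filter_eq_count hgr p)
    rw [h, Multiset.count_sub, hs1, hr1] at hp
    omega
  obtain ⟨hf_last, hf_one⟩ := hf.ne_last_and_eq_of_card_filter_eq (c := 1)
    (fun p => (hs _ (hf_mem p)).1) (by rw [hfr, hr1])
  refine ⟨⟨f, g, fun p => hs _ (hf_mem p), fun p => hs _ (hg_mem p), hf, hg, fun p hp => ?_⟩,
    fun k => ?_, ?_⟩
  · rw [hf_one _ (Fin.ne_of_val_ne (by simp only [Fin.val_last]; omega))]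
    have := (hs _ (hg_mem p)).1
    exact lt_of_le_of_ne this (hg_ne p).symm
  · have := Multiset.count_le_of_le k hrs
    change #{p | f p = k} + #{p | g p = k} = _
    rw [hfr, hgr, Multiset.count_sub]
    omega
  · have hmem := Multiset.mem_of_card_filter_eq_count hfr (Fin.last a)
    simp only [r, Multiset.mem_cons, Multiset.mem_replicate] at hmem
    tauto

theorem card_content_eq_card_erase_one (hμ : μ2 ≤ a) (hs1 : s.count 1 = a)
    (hcard : Multiset.card s = a + 1 + μ2) (hs : ∀ k ∈ s, 1 ≤ k ∧ k ≤ n) :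
    Nat.card {T : TwoRowStandardTableau (a + 1) μ2 n // ∀ k, T.content k = s.count k} =
      #(s.toFinset.erase 1) := by
  let lastEntry (T : {T : TwoRowStandardTableau (a + 1) μ2 n // ∀ k, T.content k = s.count k}) :
      ℕ := T.1.row1 (Fin.last a)
  have hinj : Function.Injective lastEntry := fun T T' h =>
    Subtype.ext (eq_of_row1_last_eq (by omega) hs1 T.2 T'.2 h)
  have hrange : Set.range lastEntry = ↑(s.toFinset.erase 1) := by
    ext x
    simp only [Set.mem_range, coe_erase, Set.mem_sdiff, mem_coe, Multiset.mem_toFinset,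
      Set.mem_singleton_iff]
    constructor
    · rintro ⟨T, rfl⟩
      exact ⟨row1_mem_of_content_eq T.2 _, (row1_last_ne_one_and_eq_one (by omega) hs1 T.2).1⟩
    · rintro ⟨hx, hx1⟩
      obtain ⟨T, hT, rfl⟩ := exists_row1_last_eq hμ hs1 hcard hs hx hx1
      exact ⟨⟨T, hT⟩, rfl⟩
  rw [← Nat.card_range_of_injective hinj, hrange, Nat.card_coe_set_eq, Set.ncard_coe_finset]

end OnesInFirstRow

end TwoRowStandardTableau

/-- The content `wᵢ` as a multiset of entries. -/
def contentW (a b i : ℕ) : Multiset ℕ :=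
  Multiset.replicate a 1 + i ::ₘ i ::ₘ (Finset.Icc 2 (b - 1)).val

theorem mem_contentW {a b i k : ℕ} (hi : 2 ≤ i) (hib : i ≤ b - 1) :
    k ∈ contentW a b i ↔ (a ≠ 0 ∧ k = 1) ∨ (2 ≤ k ∧ k ≤ b - 1) := by
  simp only [contentW, Multiset.mem_add, Multiset.mem_replicate, Multiset.mem_cons,
    Finset.mem_val, Finset.mem_Icc]
  omega

theorem count_contentW {a b i : ℕ} (hi : 2 ≤ i) (hib : i ≤ b - 1) (k : ℕ) :
    (contentW a b i).count k =
      if k = 1 then a else if k = i then 3 else if 2 ≤ k ∧ k ≤ b - 1 then 1 else 0 := by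
  simp only [contentW, Multiset.count_add, Multiset.count_replicate, Multiset.count_cons,
    Multiset.count_eq_of_nodup (Finset.nodup _), Finset.mem_val, Finset.mem_Icc]
  split_ifs <;> omega

theorem card_contentW {a b i : ℕ} (hi : 2 ≤ i) (hib : i ≤ b - 1) :
    Multiset.card (contentW a b i) = a + 1 + (b - 1) := by
  simp only [contentW, Multiset.card_add, Multiset.card_replicate, Multiset.card_cons,
    Finset.card_val, Nat.card_Icc]
  omega

theorem toFinset_contentW_erase_one {a b i : ℕ} (hi : 2 ≤ i) (hib : i ≤ b - 1) :
    (contentW a b i).toFinset.erase 1 = Finset.Icc 2 (b - 1) := by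
  ext k
  rw [mem_erase, Multiset.mem_toFinset, mem_contentW hi hib, Finset.mem_Icc]
  omega

theorem stmt_12_general (a b i n : ℕ) (hi : 2 ≤ i) (hib : i ≤ b - 1)
    (hμ : b - 1 < a + 1) (hn : a + b ≤ n) :
    Nat.card {T : TwoRowStandardTableau (a + 1) (b - 1) n //
      ∀ k, T.content k =
        if k = 1 then a else if k = i then 3 else if 2 ≤ k ∧ k ≤ b - 1 then 1 else 0} =
      b - 2 := by
  simp only [← count_contentW (a := a) hi hib]
  rw [TwoRowStandardTableau.card_content_eq_card_erase_one (by omega) (by simp [count_contentW hi hib])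
    (card_contentW hi hib) ?_, toFinset_contentW_erase_one hi hib, Nat.card_Icc]
  · omega
  · intro k hk
    rw [mem_contentW hi hib] at hk
    omega

/-- The number of standard tableaux of shape `μ = (a+1, b-1)` and content
`wᵢ = (a, 1^{i-2}, 3, 1^{b-1-i})` (entry `1` appearing `a` times, entry `i` three times, and
every other entry of `{2, …, b-1}` once) is `b - 2`. -/
theorem stmt_12 (a b i n : ℕ) (hb : 3 ≤ b) (hi : 2 ≤ i) (hib : i ≤ b - 1)
    (hμ : b - 1 < a + 1) (hn : a + b ≤ n) :
    Nat.card {T : TwoRowStandardTableau (a + 1) (b - 1) n //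
      ∀ k, T.content k =
        if k = 1 then a else if k = i then 3 else if 2 ≤ k ∧ k ≤ b - 1 then 1 else 0} =
      b - 2 :=
  stmt_12_general a b i n hi hib hμ hn
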